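/- Let φ be an automorphism of D with the property that every sequence (a_n) in D satisfying φ^[n](a_n) = 0 for all n is a Blaschke sequence. Then for every automorphism ψ of D and every sequence (b_n) in D with ψ(φ^[n](b_n)) = 0 for all n, the sequence (b_n) is a Blaschke sequence. -/

import Mathlib

/-!
Disc automorphisms preserve the pseudo-hyperbolic distance `ρ(z, w) = |z - w| / |1 - w̄ z|`.
Since `φ` maps the disc onto itself, there are `a_n` in the disc with `φ^[n] a_n = 0`, and then
`ρ(a_n, b_n) = ρ(ψ (φ^[n] a_n), ψ (φ^[n] b_n)) = ρ(ψ 0, 0) = |ψ 0| =: r < 1` for every `n`.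
Points at pseudo-hyperbolic distance at most `r < 1` have comparable distances to the boundary,
`1 - |b| ≤ (1 + r) / (1 - r) · (1 - |a|)`, so `(b_n)` inherits the Blaschke condition from `(a_n)`.
-/

/-- A (holomorphic) automorphism of the open unit disc `D = {z : |z| < 1}`:
a map of the form `z ↦ λ(z − a)/(1 − conj(a)·z)` with `a ∈ D` and `|λ| = 1`. -/
def IsDiscAut (φ : ℂ → ℂ) : Prop :=
  ∃ a lam : ℂ, ‖a‖ < 1 ∧ ‖lam‖ = 1 ∧
    ∀ z : ℂ, φ z = lam * (z - a) / (1 - (starRingEnd ℂ) a * z)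

/-- An elliptic automorphism: `φ ≠ id` with a fixed point in the open disc. -/
def IsEllipticAut (φ : ℂ → ℂ) : Prop :=
  IsDiscAut φ ∧ φ ≠ id ∧ ∃ a : ℂ, ‖a‖ < 1 ∧ φ a = a

/-- A parabolic automorphism: `φ ≠ id` with exactly one fixed point in the closed disc,
lying on the unit circle. -/
def IsParabolicAut (φ : ℂ → ℂ) : Prop :=
  IsDiscAut φ ∧ φ ≠ id ∧ ∃ w : ℂ, ‖w‖ = 1 ∧
    {z : ℂ | ‖z‖ ≤ 1 ∧ φ z = z} = {w}

/-- A hyperbolic automorphism: `φ ≠ id` with exactly two fixed points in the closed disc,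
both on the unit circle. -/
def IsHyperbolicAut (φ : ℂ → ℂ) : Prop :=
  IsDiscAut φ ∧ φ ≠ id ∧ ∃ w₁ w₂ : ℂ, w₁ ≠ w₂ ∧
    ‖w₁‖ = 1 ∧ ‖w₂‖ = 1 ∧
    {z : ℂ | ‖z‖ ≤ 1 ∧ φ z = z} = {w₁, w₂}

/-- The parabolic automorphism `φ_c(z) = (1 + c − 2z)/(2c − (1 + c)z)` fixing `1`. -/
noncomputable def phiC (c : ℂ) : ℂ → ℂ := fun z => (1 + c - 2 * z) / (2 * c - (1 + c) * z)

/-- The hyperbolic automorphism `ψ_r(z) = (z − r)/(1 − r z)` fixing `−1` and `1`. -/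
noncomputable def psiR (r : ℝ) : ℂ → ℂ := fun z => (z - (r : ℂ)) / (1 - (r : ℂ) * z)

open Complex ComplexConjugate Set

noncomputable def pseudoHyperbolicDist (z w : ℂ) : ℝ := ‖z - w‖ / ‖1 - conj w * z‖

section PseudoHyperbolicDist

variable {z w : ℂ}

lemma one_sub_conj_mul_ne_zero (hz : ‖z‖ < 1) (hw : ‖w‖ < 1) : 1 - conj w * z ≠ 0 := by
  rw [sub_ne_zero, ne_comm]
  apply ne_of_apply_ne norm
  rw [norm_one, norm_mul, norm_conj]
  exact (mul_lt_one_of_nonneg_of_lt_one_left (norm_nonneg w) hw hz.le).ne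

lemma sq_norm_one_sub_conj_mul_sub_sq_norm_sub (z w : ℂ) :
    ‖1 - conj w * z‖ ^ 2 - ‖z - w‖ ^ 2 = (1 - ‖w‖ ^ 2) * (1 - ‖z‖ ^ 2) := by
  simp only [Complex.sq_norm, normSq_apply, sub_re, sub_im, mul_re, mul_im, one_re, one_im,
    conj_re, conj_im]
  ring

lemma pseudoHyperbolicDist_lt_one (hz : ‖z‖ < 1) (hw : ‖w‖ < 1) :
    pseudoHyperbolicDist z w < 1 := by
  have hd := norm_pos_iff.2 (one_sub_conj_mul_ne_zero hz hw)
  rw [pseudoHyperbolicDist, div_lt_one hd, ← sq_lt_sq₀ (norm_nonneg _) hd.le, ← sub_pos,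
    sq_norm_one_sub_conj_mul_sub_sq_norm_sub]
  exact mul_pos (sub_pos.2 (pow_lt_one₀ (norm_nonneg w) hw two_ne_zero))
    (sub_pos.2 (pow_lt_one₀ (norm_nonneg z) hz two_ne_zero))

@[simp]
lemma pseudoHyperbolicDist_zero_right (z : ℂ) : pseudoHyperbolicDist z 0 = ‖z‖ := by
  simp [pseudoHyperbolicDist]

lemma one_sub_norm_le_of_pseudoHyperbolicDist_le {r : ℝ} (hz : ‖z‖ < 1) (hw : ‖w‖ < 1)
    (h : pseudoHyperbolicDist z w ≤ r) (hr : r < 1) :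
    1 - ‖w‖ ≤ (1 + r) / (1 - r) * (1 - ‖z‖) := by
  set D := ‖1 - conj w * z‖
  have hD : 0 < D := norm_pos_iff.2 (one_sub_conj_mul_ne_zero hz hw)
  have hr0 : 0 ≤ r := (div_nonneg (norm_nonneg _) hD.le).trans h
  have hzw : ‖z - w‖ ≤ r * D := (div_le_iff₀ hD).1 h
  have hD_le : D ≤ 1 - ‖z‖ ^ 2 + r * D := by
    have h1 : 0 ≤ 1 - ‖z‖ ^ 2 := sub_nonneg.2 (pow_le_one₀ (norm_nonneg z) hz.le)
    calc D = ‖((1 - ‖z‖ ^ 2 : ℝ) : ℂ) + conj (z - w) * z‖ := congrArg norm <| by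
          rw [map_sub, sub_mul, conj_mul']; push_cast; ring
      _ ≤ (1 - ‖z‖ ^ 2) + ‖z - w‖ * ‖z‖ := by
          grw [norm_add_le, norm_mul, norm_conj, Complex.norm_of_nonneg h1]
      _ ≤ 1 - ‖z‖ ^ 2 + r * D := by
          grw [mul_le_of_le_one_right (norm_nonneg _) hz.le, hzw]
  have hD_bound : (1 - r) * D ≤ 2 * (1 - ‖z‖) := by nlinarith [norm_nonneg z]
  have hw_le : 1 - ‖w‖ ≤ 1 - ‖z‖ + r * D := by linarith [norm_sub_norm_le z w]
  rw [div_mul_eq_mul_div, le_div_iff₀ (sub_pos.2 hr)]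
  nlinarith [mul_le_mul_of_nonneg_left hD_bound hr0]

end PseudoHyperbolicDist

namespace IsDiscAut

variable {φ : ℂ → ℂ}

lemma norm_apply_lt_one (hφ : IsDiscAut φ) {z : ℂ} (hz : ‖z‖ < 1) : ‖φ z‖ < 1 := by
  obtain ⟨a, lam, ha, hlam, hφ⟩ := hφ
  rw [hφ, norm_div, norm_mul, hlam, one_mul]
  exact pseudoHyperbolicDist_lt_one hz ha

lemma mapsTo (hφ : IsDiscAut φ) : MapsTo φ {z | ‖z‖ < 1} {z | ‖z‖ < 1} :=
  fun _ hz => hφ.norm_apply_lt_one hz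

lemma surjOn (hφ : IsDiscAut φ) : SurjOn φ {z | ‖z‖ < 1} {z | ‖z‖ < 1} := by
  intro w (hw : ‖w‖ < 1)
  obtain ⟨a, lam, ha, hlam, hφ⟩ := hφ
  set u := conj lam * w
  have hu : ‖u‖ < 1 := by rwa [norm_mul, norm_conj, hlam, one_mul]
  have hna : ‖-a‖ < 1 := by rwa [norm_neg]
  have hd : 1 + u * conj a ≠ 0 := by simpa [mul_comm] using one_sub_conj_mul_ne_zero hu hna
  have hz : ‖(u + a) / (1 + conj a * u)‖ < 1 := by
    simpa [pseudoHyperbolicDist] using pseudoHyperbolicDist_lt_one hu hna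
  refine ⟨_, hz, ?_⟩
  have hl : conj lam * lam = 1 := by rw [conj_mul', hlam]; norm_num
  rw [hφ, div_eq_iff (one_sub_conj_mul_ne_zero hz ha)]
  field_simp
  linear_combination (1 - conj a * a) * w * hl

lemma pseudoHyperbolicDist_apply (hφ : IsDiscAut φ) {z w : ℂ} (hz : ‖z‖ < 1) (hw : ‖w‖ < 1) :
    pseudoHyperbolicDist (φ z) (φ w) = pseudoHyperbolicDist z w := by
  obtain ⟨a, lam, ha, hlam, hφ⟩ := hφ
  have hl : conj lam * lam = 1 := by rw [conj_mul', hlam]; norm_num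
  have hdz := one_sub_conj_mul_ne_zero hz ha
  have hdw := one_sub_conj_mul_ne_zero hw ha
  have hdw' : conj (1 - conj a * w) ≠ 0 := (map_ne_zero _).2 hdw
  have hsub : φ z - φ w
      = lam * (1 - conj a * a) * (z - w) / ((1 - conj a * z) * (1 - conj a * w)) := by
    rw [hφ, hφ, div_sub_div _ _ hdz hdw]
    congr 1
    ring
  have hden : 1 - conj (φ w) * φ z
      = (1 - conj a * a) * (1 - conj w * z) / (conj (1 - conj a * w) * (1 - conj a * z)) := by
    rw [hφ, hφ, map_div₀, div_mul_div_comm, one_sub_div (mul_ne_zero hdw' hdz)]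
    congr 1
    simp only [map_mul, map_sub, map_one, conj_conj]
    linear_combination -(conj w - conj a) * (z - a) * hl
  have ha' := norm_ne_zero_iff.2 (one_sub_conj_mul_ne_zero ha ha)
  rw [pseudoHyperbolicDist, pseudoHyperbolicDist, hsub, hden]
  simp only [norm_div, norm_mul, norm_conj, hlam, one_mul]
  field_simp

lemma pseudoHyperbolicDist_iterate (hφ : IsDiscAut φ) (n : ℕ) {z w : ℂ}
    (hz : ‖z‖ < 1) (hw : ‖w‖ < 1) :
    pseudoHyperbolicDist (φ^[n] z) (φ^[n] w) = pseudoHyperbolicDist z w := by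
  induction n with
  | zero => rfl
  | succ n ih =>
    rw [Function.iterate_succ_apply', Function.iterate_succ_apply',
      hφ.pseudoHyperbolicDist_apply (hφ.mapsTo.iterate n hz) (hφ.mapsTo.iterate n hw), ih]

end IsDiscAut

/-- If every sequence `(a_n)` in `D` with `φ^[n](a_n) = 0` for all `n` is a
Blaschke sequence, then for any disc automorphism `ψ`, every sequence `(b_n)` in `D` with
`ψ(φ^[n](b_n)) = 0` for all `n` is a Blaschke sequence. -/
theorem stmt_14 (φ : ℂ → ℂ) (hφ : IsDiscAut φ)
    (hblaschke : ∀ a : ℕ → ℂ, (∀ n : ℕ, ‖a n‖ < 1) →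
      (∀ n : ℕ, φ^[n] (a n) = 0) → Summable (fun n : ℕ => 1 - ‖a n‖))
    (ψ : ℂ → ℂ) (hψ : IsDiscAut ψ)
    (b : ℕ → ℂ) (hb : ∀ n : ℕ, ‖b n‖ < 1)
    (hzero : ∀ n : ℕ, ψ (φ^[n] (b n)) = 0) :
    Summable (fun n : ℕ => 1 - ‖b n‖) := by
  choose a ha ha0 using fun n => hφ.surjOn.iterate n (show ‖(0 : ℂ)‖ < 1 by simp)
  have hdist : ∀ n, pseudoHyperbolicDist (a n) (b n) = ‖ψ 0‖ := fun n => by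
    have hφa := hφ.mapsTo.iterate n (ha n)
    have hφb := hφ.mapsTo.iterate n (hb n)
    rw [← hφ.pseudoHyperbolicDist_iterate n (ha n) (hb n),
      ← hψ.pseudoHyperbolicDist_apply hφa hφb, ha0, hzero, pseudoHyperbolicDist_zero_right]
  have hψ0 : ‖ψ 0‖ < 1 := hψ.norm_apply_lt_one (by simp)
  refine .of_nonneg_of_le (fun n => sub_nonneg.2 (hb n).le)
    (fun n => one_sub_norm_le_of_pseudoHyperbolicDist_le (ha n) (hb n) (hdist n).le hψ0)
    ((hblaschke a ha ha0).mul_left _)
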